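/- arXiv:1409.8044 — 3 statements merged into one kernel-verified Lean document; each statement's English description precedes it below -/
import Mathlib

section
/- Let M be an r × r real matrix all of whose entries are ≥ 1, and let λ(M) denote its spectral radius. Then λ(M) ≤ ‖M‖ ≤ r·λ(M)², where ‖M‖ denotes the operator norm. -/
/-- The operator norm of an r × r real matrix acting on Euclidean space ℝ^r. -/
noncomputable def opNorm {r : ℕ} (M : Matrix (Fin r) (Fin r) ℝ) : ℝ :=
  ‖(Matrix.toEuclideanCLM (𝕜 := ℝ) M : EuclideanSpace ℝ (Fin r) →L[ℝ] EuclideanSpace ℝ (Fin r))‖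

/-- The Euclidean norm of a vector in ℝ^r. -/
noncomputable def vNorm {r : ℕ} (v : Fin r → ℝ) : ℝ :=
  ‖(WithLp.equiv 2 (Fin r → ℝ)).symm v‖

/-!
Both bounds compare the L2 operator norm with the entries, `|a i j| ≤ ‖a‖ ≤ r · max |a i j|`,
and pass to `k`-th powers, where the factor `r` disappears on taking `k`-th roots. Lower bound:
for an eigenvalue `μ` of the complexification `N = M.map ofReal`,
`|μ| ^ k ≤ ‖N ^ k‖ ≤ r ‖M‖ ^ k` for every `k`, so `|μ| ≤ ‖M‖`. Upper bound: entries `≥ 1`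
give `m i j ≤ (M ^ 2) j j`, so `m i j ^ k ≤ (M ^ (2k)) j j ≤ ‖N ^ (2k)‖`, and Gelfand's formula
yields `m i j ≤ λ ^ 2`, whence `‖M‖ ≤ r λ ^ 2`.
-/

open Filter Topology
open scoped Matrix.Norms.L2Operator

namespace Matrix

section RCLike

variable {𝕜 : Type*} [RCLike 𝕜] {m n : Type*} [Fintype m] [Fintype n] [DecidableEq n]

theorem norm_apply_le_l2_opNorm (A : Matrix m n 𝕜) (i : m) (j : n) : ‖A i j‖ ≤ ‖A‖ :=
  calc ‖A i j‖ = ‖(EuclideanSpace.equiv m 𝕜).symm (A *ᵥ Pi.single j 1) i‖ := by simp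
    _ ≤ ‖(EuclideanSpace.equiv m 𝕜).symm (A *ᵥ EuclideanSpace.single j 1)‖ :=
      PiLp.norm_apply_le _ i
    _ ≤ ‖A‖ * ‖EuclideanSpace.single j (1 : 𝕜)‖ := A.l2_opNorm_mulVec _
    _ = ‖A‖ := by simp

theorem l2_opNorm_le_of_norm_apply_le (A : Matrix m n 𝕜) {C : ℝ} (hC : 0 ≤ C)
    (h : ∀ i j, ‖A i j‖ ≤ C) : ‖A‖ ≤ √(Fintype.card m * Fintype.card n) * C := by
  rw [l2_opNorm_def]
  refine ContinuousLinearMap.opNorm_le_bound _ (by positivity) fun x => ?_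
  refine (sq_le_sq₀ (by positivity) (by positivity)).mp ?_
  have hrow : ∀ i, ‖(A *ᵥ x) i‖ ≤ C * ∑ j, ‖x j‖ := fun i =>
    calc ‖(A *ᵥ x) i‖ ≤ ∑ j, ‖A i j‖ * ‖x j‖ := by
          simp_rw [← norm_mul]; exact norm_sum_le _ _
      _ ≤ ∑ j, C * ‖x j‖ := by gcongr with j; exact h i j
      _ = C * ∑ j, ‖x j‖ := by rw [Finset.mul_sum]
  have hsum : (∑ j, ‖x j‖) ^ 2 ≤ Fintype.card n * ‖x‖ ^ 2 := by
    simpa [EuclideanSpace.norm_sq_eq] using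
      sq_sum_le_card_mul_sum_sq (s := Finset.univ) (f := fun j => ‖x j‖)
  calc ‖(EuclideanSpace.equiv m 𝕜).symm (A *ᵥ x)‖ ^ 2 = ∑ i, ‖(A *ᵥ x) i‖ ^ 2 :=
        EuclideanSpace.norm_sq_eq _
    _ ≤ ∑ _i : m, (C * ∑ j, ‖x j‖) ^ 2 := by
      gcongr with i; exact hrow i
    _ ≤ ∑ _i : m, C ^ 2 * (Fintype.card n * ‖x‖ ^ 2) := by rw [mul_pow]; gcongr
    _ = (√(Fintype.card m * Fintype.card n) * C * ‖x‖) ^ 2 := by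
      rw [mul_pow, mul_pow, Real.sq_sqrt (by positivity)]; simp; ring

theorem l2_opNorm_map_ofReal_le (A : Matrix m n ℝ) :
    ‖A.map ((↑) : ℝ → 𝕜)‖ ≤ √(Fintype.card m * Fintype.card n) * ‖A‖ :=
  l2_opNorm_le_of_norm_apply_le _ (norm_nonneg A) fun i j => by
    simpa using A.norm_apply_le_l2_opNorm i j

end RCLike

section OrderedSemiring

variable {α : Type*} [Semiring α] [PartialOrder α] [IsOrderedRing α]
  {n : Type*} [Fintype n] [DecidableEq n]

theorem pow_apply_diag_le {A : Matrix n n α} (hA : ∀ i j, 0 ≤ A i j) (k : ℕ) (j : n) :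
    A j j ^ k ≤ (A ^ k) j j := by
  induction k with
  | zero => simp
  | succ k ih =>
    rw [pow_succ, pow_succ, mul_apply]
    exact (mul_le_mul_of_nonneg_right ih (hA j j)).trans <|
      Finset.single_le_sum (fun l _ => mul_nonneg (pow_apply_nonneg hA k j l) (hA l j))
        (Finset.mem_univ j)

theorem le_sq_apply_diag {A : Matrix n n α} (hA : ∀ i j, 1 ≤ A i j) (i j : n) :
    A i j ≤ (A ^ 2) j j := by
  have hA0 : ∀ i j, 0 ≤ A i j := fun i j => zero_le_one.trans (hA i j)
  rw [sq, mul_apply]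
  calc A i j ≤ A j i * A i j := le_mul_of_one_le_left (hA0 i j) (hA j i)
    _ ≤ ∑ l, A j l * A l j :=
      Finset.single_le_sum (fun l _ => mul_nonneg (hA0 j l) (hA0 l j)) (Finset.mem_univ i)

end OrderedSemiring

end Matrix

theorem le_of_eventually_pow_le_mul_pow {x y C : ℝ} (hy : 0 ≤ y)
    (h : ∀ᶠ n : ℕ in atTop, x ^ n ≤ C * y ^ n) : x ≤ y := by
  by_contra! hxy
  have hx : 0 < x := hy.trans_lt hxy
  have hlim : Tendsto (fun n : ℕ => C * (y / x) ^ n) atTop (𝓝 (C * 0)) :=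
    (tendsto_pow_atTop_nhds_zero_of_lt_one (by positivity) ((div_lt_one hx).2 hxy)).const_mul C
  obtain ⟨n, hn, hsmall⟩ :=
    (h.and (hlim.eventually (gt_mem_nhds (show C * 0 < 1 by simp)))).exists
  rw [div_pow, ← mul_div_assoc, div_lt_one (by positivity)] at hsmall
  linarith

namespace spectrum

section Algebra

variable {𝕜 A : Type*} [NormedField 𝕜] [Ring A] [Algebra 𝕜 A]

theorem spectralRadius_eq_ofReal_of_isGreatest {a : A} {lam : ℝ}
    (h : IsGreatest {x : ℝ | ∃ μ ∈ spectrum 𝕜 a, ‖μ‖ = x} lam) :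
    spectralRadius 𝕜 a = ENNReal.ofReal lam := by
  obtain ⟨⟨μ, hμ, rfl⟩, hmax⟩ := h
  refine le_antisymm (iSup₂_le fun ν hν => ?_) (le_iSup₂_of_le μ hμ ?_)
  · rw [← enorm_eq_nnnorm, ← ofReal_norm]
    exact ENNReal.ofReal_le_ofReal (hmax ⟨ν, hν, rfl⟩)
  · rw [← enorm_eq_nnnorm, ← ofReal_norm]

theorem spectralRadius_pow [IsAlgClosed 𝕜] (a : A) {n : ℕ} (hn : n ≠ 0) :
    spectralRadius 𝕜 (a ^ n) = spectralRadius 𝕜 a ^ n := by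
  refine le_antisymm ?_ (spectralRadius_pow_le a n hn)
  simp only [spectralRadius, map_pow_of_pos a (Nat.pos_of_ne_zero hn),
    ENNReal.iSup₂_pow_of_ne_zero _ hn]
  refine iSup₂_le ?_
  rintro _ ⟨x, hx, rfl⟩
  exact le_iSup₂_of_le x hx (by simp)

end Algebra

theorem ofReal_le_spectralRadius_of_pow_le_norm_pow {A : Type*} [NormedRing A]
    [NormedAlgebra ℂ A] [CompleteSpace A] (a : A) {c : ℝ} (hc : 0 ≤ c)
    (h : ∀ᶠ n : ℕ in atTop, c ^ n ≤ ‖a ^ n‖) : ENNReal.ofReal c ≤ spectralRadius ℂ a := by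
  refine ge_of_tendsto (pow_norm_pow_one_div_tendsto_nhds_spectralRadius a) ?_
  filter_upwards [h, eventually_ne_atTop 0] with n hn hn0
  refine ENNReal.ofReal_le_ofReal ?_
  calc c = (c ^ n) ^ (1 / n : ℝ) := by rw [one_div, Real.pow_rpow_inv_natCast hc hn0]
    _ ≤ ‖a ^ n‖ ^ (1 / n : ℝ) := by gcongr

end spectrum

namespace Matrix

variable {n : Type*} [Fintype n] [DecidableEq n]

theorem map_ofReal_pow (A : Matrix n n ℝ) (k : ℕ) :
    (A ^ k).map ((↑) : ℝ → ℂ) = A.map (↑) ^ k :=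
  Matrix.map_pow A Complex.ofRealHom k

theorem norm_le_l2_opNorm_of_mem_spectrum_map_ofReal (A : Matrix n n ℝ) {μ : ℂ}
    (hμ : μ ∈ spectrum ℂ (A.map ((↑) : ℝ → ℂ))) : ‖μ‖ ≤ ‖A‖ := by
  refine le_of_eventually_pow_le_mul_pow (norm_nonneg A)
    (C := √(Fintype.card n * Fintype.card n) * ‖(1 : Matrix n n ℂ)‖)
    ((eventually_ne_atTop 0).mono fun k hk => ?_)
  calc ‖μ‖ ^ k = ‖μ ^ k‖ := (norm_pow _ _).symm
    _ ≤ ‖A.map ((↑) : ℝ → ℂ) ^ k‖ * ‖(1 : Matrix n n ℂ)‖ :=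
      spectrum.norm_le_norm_mul_of_mem (spectrum.pow_mem_pow _ k hμ)
    _ ≤ √(Fintype.card n * Fintype.card n) * ‖A ^ k‖ * ‖(1 : Matrix n n ℂ)‖ := by
      rw [← map_ofReal_pow]; gcongr; exact l2_opNorm_map_ofReal_le _
    _ ≤ √(Fintype.card n * Fintype.card n) * ‖A‖ ^ k * ‖(1 : Matrix n n ℂ)‖ := by
      gcongr; exact norm_pow_le' A (Nat.pos_of_ne_zero hk)
    _ = _ := by ring

theorem ofReal_apply_le_spectralRadius_sq {A : Matrix n n ℝ} (hA : ∀ i j, 1 ≤ A i j)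
    (i j : n) :
    ENNReal.ofReal (A i j) ≤ spectralRadius ℂ (A.map ((↑) : ℝ → ℂ)) ^ 2 := by
  have hA0 : ∀ i j, 0 ≤ A i j := fun i j => zero_le_one.trans (hA i j)
  rw [← spectrum.spectralRadius_pow _ two_ne_zero]
  refine spectrum.ofReal_le_spectralRadius_of_pow_le_norm_pow _ (hA0 i j)
    (Eventually.of_forall fun k => ?_)
  calc A i j ^ k ≤ (A ^ 2) j j ^ k := pow_le_pow_left₀ (hA0 i j) (le_sq_apply_diag hA i j) k
    _ ≤ ((A ^ 2) ^ k) j j := pow_apply_diag_le (pow_apply_nonneg hA0 2) k j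
    _ ≤ ‖((A ^ 2) ^ k).map ((↑) : ℝ → ℂ)‖ := (le_abs_self _).trans <| by
      simpa using norm_apply_le_l2_opNorm (((A ^ 2) ^ k).map ((↑) : ℝ → ℂ)) j j
    _ = ‖(A.map ((↑) : ℝ → ℂ) ^ 2) ^ k‖ := by rw [← pow_mul, ← pow_mul, map_ofReal_pow]

end Matrix

theorem opNorm_eq_l2_opNorm {r : ℕ} (M : Matrix (Fin r) (Fin r) ℝ) : opNorm M = ‖M‖ := rfl

theorem stmt3_general (r : ℕ) (M : Matrix (Fin r) (Fin r) ℝ)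
    (hM : ∀ i j, 1 ≤ M i j) (lam : ℝ)
    (hlam : IsGreatest {x : ℝ | ∃ μ ∈ spectrum ℂ (M.map Complex.ofReal), ‖μ‖ = x} lam) :
    lam ≤ opNorm M ∧ opNorm M ≤ r * lam ^ 2 := by
  have hρ := spectrum.spectralRadius_eq_ofReal_of_isGreatest hlam
  obtain ⟨⟨μ, hμ, rfl⟩, -⟩ := hlam
  rw [opNorm_eq_l2_opNorm]
  refine ⟨M.norm_le_l2_opNorm_of_mem_spectrum_map_ofReal hμ, ?_⟩
  have hentry : ∀ i j, ‖M i j‖ ≤ ‖μ‖ ^ 2 := fun i j => by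
    have := M.ofReal_apply_le_spectralRadius_sq hM i j
    rw [hρ, ← ENNReal.ofReal_pow (norm_nonneg μ),
      ENNReal.ofReal_le_ofReal_iff (by positivity)] at this
    rwa [Real.norm_of_nonneg (zero_le_one.trans (hM i j))]
  simpa using M.l2_opNorm_le_of_norm_apply_le (by positivity) hentry

/-- If all entries of an r × r real matrix M are ≥ 1, and lam is its spectral radius
(the maximum modulus of its complex eigenvalues), then lam ≤ ‖M‖ ≤ r·lam². -/
theorem stmt3 (r : ℕ) (hr : 0 < r) (M : Matrix (Fin r) (Fin r) ℝ)
    (hM : ∀ i j, 1 ≤ M i j) (lam : ℝ)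
    (hlam : IsGreatest {x : ℝ | ∃ μ ∈ spectrum ℂ (M.map Complex.ofReal), ‖μ‖ = x} lam) :
    lam ≤ opNorm M ∧ opNorm M ≤ r * lam ^ 2 :=
  stmt3_general r M hM lam hlam
end

section
/- Let r ≥ 2 and let θ₁,…,θₙ be an admissible sequence of elementary Nielsen automorphisms of F_r, where θ_i = [x_i ↦ y_i x_i]. Then the composition of derivative maps D(θₙ ∘ ⋯ ∘ θ₁) := Dθₙ ∘ ⋯ ∘ Dθ₁ : A^{±1} → A^{±1} has image exactly A^{±1} ∖ {xₙ}; in particular it is non-injective with image of size exactly 2r − 1, so exactly one pair of distinct letters is identified. -/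
open scoped Classical

abbrev Letter (r : ℕ) := Fin r × Bool

def linv {r : ℕ} (a : Letter r) : Letter r := (a.1, !a.2)

/-- An elementary Nielsen automorphism `[x ↦ yx]` is parametrized by the pair `(x, y)`
with `y ≠ x` and `y ≠ x⁻¹`. -/
def Nielsen {r : ℕ} (p : Letter r × Letter r) : Prop := p.2 ≠ p.1 ∧ p.2 ≠ linv p.1

/-- Admissibility of the ordered pair `([x ↦ yx], [x′ ↦ y′x′])`. -/
def Adm {r : ℕ} (p q : Letter r × Letter r) : Prop :=
  (q.1 = p.1 ∧ q.2 ≠ linv p.2) ∨ (q.2 = p.1 ∧ q.1 ≠ linv p.2)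

/-- The derivative map of `[x ↦ yx]`: sends `x ↦ y` and fixes every other letter. -/
def Dmap {r : ℕ} (p : Letter r × Letter r) (a : Letter r) : Letter r :=
  if a = p.1 then p.2 else a

/-- The composition `Dθₙ ∘ ⋯ ∘ Dθ₁` of derivative maps (applying `θ 0` first). -/
def DcompN (r n : ℕ) (θ : ℕ → Letter r × Letter r) (a : Letter r) : Letter r :=
  (List.range n).foldl (fun b i => Dmap (θ i) b) a

/-- Letter-by-letter substitution for `[x ↦ yx]`: replaces `x` by `yx`, `x⁻¹` by `x⁻¹y⁻¹`. -/
def subst (r : ℕ) (p : Letter r × Letter r) (w : List (Letter r)) : List (Letter r) :=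
  w.flatMap (fun a =>
    if a = p.1 then [p.2, p.1]
    else if a = linv p.1 then [linv p.1, linv p.2]
    else [a])

/-- Apply the substitutions `θ 0, θ 1, …, θ (n-1)` in order, letter by letter. -/
def iterSubst (r n : ℕ) (θ : ℕ → Letter r × Letter r) (w : List (Letter r)) : List (Letter r) :=
  (List.range n).foldl (fun w i => subst r (θ i) w) w

/-!
Dθ with θ = [x ↦ yx] misses only x, and on A^{±1} ∖ {x'} it is a bijection onto A^{±1} ∖ {x}
as soon as x = x' (then it is the identity there) or y = x' (then it is the transposition of
x and y there). Admissibility of consecutive θ's is exactly what makes one of these two cases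
occur, so by induction the image of Dθₙ ∘ ⋯ ∘ Dθ₁ is A^{±1} ∖ {xₙ}, which has 2r − 1 elements.
-/

lemma DcompN_succ (r n : ℕ) (θ : ℕ → Letter r × Letter r) :
    DcompN r (n + 1) θ = Dmap (θ n) ∘ DcompN r n θ := by
  funext a
  simp [DcompN, List.range_succ]

section Dmap

variable {r : ℕ} {q : Letter r × Letter r}

lemma Dmap_ne_fst (hq : q.2 ≠ q.1) (a : Letter r) : Dmap q a ≠ q.1 := by
  unfold Dmap
  split_ifs with ha
  · exact hq
  · exact ha

lemma Dmap_image_compl {x : Letter r} (hq : q.2 ≠ q.1) (hx : q.1 = x ∨ q.2 = x) :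
    Dmap q '' {x}ᶜ = {q.1}ᶜ := by
  rcases hx with rfl | rfl
  · have hid : Set.EqOn (Dmap q) id {q.1}ᶜ := fun a ha => if_neg ha
    rw [Set.image_congr hid, Set.image_id]
  · refine Set.Subset.antisymm ?_ fun a ha => ?_
    · rintro _ ⟨a, -, rfl⟩
      exact Dmap_ne_fst hq a
    by_cases ha' : a = q.2
    · exact ⟨q.1, hq.symm, by simp [Dmap, ha']⟩
    · exact ⟨a, ha', if_neg ha⟩

lemma range_Dmap (hq : q.2 ≠ q.1) : Set.range (Dmap q) = {q.1}ᶜ := by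
  refine Set.Subset.antisymm ?_ ?_
  · rintro _ ⟨a, rfl⟩
    exact Dmap_ne_fst hq a
  · rw [← Dmap_image_compl hq (Or.inl rfl)]
    exact Set.image_subset_range _ _

end Dmap

lemma Adm.fst_eq_or_snd_eq {r : ℕ} {p q : Letter r × Letter r} (h : Adm p q) :
    q.1 = p.1 ∨ q.2 = p.1 :=
  h.imp And.left And.left

lemma range_DcompN {r n : ℕ} (hn : 1 ≤ n) {θ : ℕ → Letter r × Letter r}
    (hN : ∀ i < n, Nielsen (θ i)) (hadm : ∀ i, i + 1 < n → Adm (θ i) (θ (i + 1))) :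
    Set.range (DcompN r n θ) = {(θ (n - 1)).1}ᶜ := by
  induction n, hn using Nat.le_induction with
  | base => exact range_Dmap (hN 0 one_pos).1
  | succ n hn ih =>
    have hadm_last : Adm (θ (n - 1)) (θ n) := by
      simpa [Nat.sub_add_cancel hn] using hadm (n - 1) (by omega)
    rw [DcompN_succ, Set.range_comp, ih (fun i hi => hN i (by omega))
      (fun i hi => hadm i (by omega))]
    exact Dmap_image_compl (hN n (by omega)).1 hadm_last.fst_eq_or_snd_eq

theorem stmt10_general (r n : ℕ) (hn : 1 ≤ n) (θ : ℕ → Letter r × Letter r)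
    (hN : ∀ i < n, Nielsen (θ i))
    (hadm : ∀ i, i + 1 < n → Adm (θ i) (θ (i + 1))) :
    Set.range (DcompN r n θ) = {a : Letter r | a ≠ (θ (n - 1)).1} ∧
    ¬ Function.Injective (DcompN r n θ) ∧
    (Finset.univ.image (DcompN r n θ)).card = 2 * r - 1 := by
  have hrange := range_DcompN hn hN hadm
  set x := (θ (n - 1)).1
  have hx : x ∉ Set.range (DcompN r n θ) := by simp [hrange]
  refine ⟨hrange, fun hinj => hx (Finite.injective_iff_surjective.mp hinj x), ?_⟩
  have himage : Finset.univ.image (DcompN r n θ) = Finset.univ.erase x := by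
    apply Finset.coe_injective
    simp [hrange, Set.compl_eq_univ_sdiff]
  rw [himage, Finset.card_erase_of_mem (Finset.mem_univ x), Finset.card_univ]
  simp [mul_comm]

/-- For an admissible sequence θ₁,…,θₙ of elementary Nielsen automorphisms, the composition
of the derivative maps has image exactly A^{±1} ∖ {xₙ}; in particular it is non-injective
with image of size exactly 2r − 1. -/
theorem stmt10 (r n : ℕ) (hr : 2 ≤ r) (hn : 1 ≤ n) (θ : ℕ → Letter r × Letter r)
    (hN : ∀ i < n, Nielsen (θ i))
    (hadm : ∀ i, i + 1 < n → Adm (θ i) (θ (i + 1))) :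
    Set.range (DcompN r n θ) = {a : Letter r | a ≠ (θ (n - 1)).1} ∧
    ¬ Function.Injective (DcompN r n θ) ∧
    (Finset.univ.image (DcompN r n θ)).card = 2 * r - 1 :=
  stmt10_general r n hn θ hN hadm
end

section
/- Let r ≥ 2 and let θ₁,…,θₙ be a cyclically admissible sequence of elementary Nielsen automorphisms of F_r, with θ_i = [x_i ↦ y_i x_i]. Let D := Dθₙ ∘ ⋯ ∘ Dθ₁ : A^{±1} → A^{±1}. Then for every k ≥ 1, the k-fold composition D^k has image of size exactly 2r − 1; equivalently, the map D identifies exactly the pair {x₁, y₁} and permutes the remaining structure so that no further collapsing occurs under iteration. -/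
open scoped Classical

open Finset

/-! The derivative map of `[x₁ ↦ y₁x₁]` glues `x₁` to `y₁`. Each later `Dθᵢ₊₁` can only glue
`xᵢ₊₁` to `yᵢ₊₁`, and admissibility puts `xᵢ` among these two letters; since `xᵢ` is no longer in
the image of `Dθᵢ ∘ ⋯ ∘ Dθ₁`, the composite `D` identifies exactly the pair `{x₁, y₁}`, so its
image has `2r - 1` letters. Cyclic admissibility puts `xₙ`, which `D` misses, into `{x₁, y₁}`,
so `D` is injective on its own image and no power of `D` collapses anything further. -/

def CollapsesAtMost {α β : Type*} (f : α → β) (e : Sym2 α) : Prop :=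
  ∀ a b, f a = f b → a = b ∨ s(a, b) = e

namespace CollapsesAtMost

variable {α β γ : Type*} {f : β → γ} {g : α → β} {e : Sym2 α} {e' : Sym2 β}

theorem comp (hf : CollapsesAtMost f e') (hg : CollapsesAtMost g e) {x : β} (hx : x ∈ e')
    (hgx : ∀ a, g a ≠ x) : CollapsesAtMost (f ∘ g) e := by
  intro a b hab
  rcases hf (g a) (g b) hab with h | h
  · exact hg a b h
  · rw [← h, Sym2.mem_iff] at hx
    rcases hx with hx | hx
    exacts [absurd hx.symm (hgx a), absurd hx.symm (hgx b)]

theorem injOn_ne (hf : CollapsesAtMost f e') {x : β} (hx : x ∈ e') : Set.InjOn f {a | a ≠ x} := by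
  intro a ha b hb hab
  refine (hf a b hab).resolve_right fun h => ?_
  rw [← h, Sym2.mem_iff] at hx
  rcases hx with rfl | rfl
  exacts [ha rfl, hb rfl]

theorem card_image [Fintype β] [DecidableEq γ] {u v : β} (hf : CollapsesAtMost f s(u, v))
    (huv : u ≠ v) (hfuv : f u = f v) : #(univ.image f) = Fintype.card β - 1 := by
  have himage : univ.image f = (univ.erase u).image f := by
    refine (image_subset_image (erase_subset _ _)).antisymm' fun c hc => ?_
    obtain ⟨a, -, rfl⟩ := mem_image.mp hc
    by_cases ha : a = u
    · subst ha
      exact hfuv ▸ mem_image_of_mem f (mem_erase.mpr ⟨huv.symm, mem_univ v⟩)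
    · exact mem_image_of_mem f (mem_erase.mpr ⟨ha, mem_univ a⟩)
  rw [himage, card_image_of_injOn, card_erase_of_mem (mem_univ u), card_univ]
  exact (hf.injOn_ne (Sym2.mem_mk_left u v)).mono fun a ha => (mem_erase.mp ha).1

end CollapsesAtMost

theorem card_image_iterate_of_injOn_range {α : Type*} [Fintype α] [DecidableEq α] {f : α → α}
    (hf : Set.InjOn f (Set.range f)) {k : ℕ} (hk : 1 ≤ k) :
    #(univ.image f^[k]) = #(univ.image f) := by
  induction k, hk using Nat.le_induction with
  | base => rfl
  | succ k hk ih =>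
    have hrange : ∀ c ∈ univ.image f^[k], c ∈ Set.range f := by
      intro c hc
      obtain ⟨a, -, rfl⟩ := mem_image.mp hc
      obtain ⟨j, rfl⟩ := Nat.exists_eq_add_of_le' hk
      exact ⟨f^[j] a, (Function.iterate_succ_apply' f j a).symm⟩
    rw [Function.iterate_succ', ← image_image, card_image_of_injOn (hf.mono hrange), ih]

section Nielsen

variable {r : ℕ}

theorem Adm.fst_mem {p q : Letter r × Letter r} (h : Adm p q) : p.1 ∈ s(q.1, q.2) := by
  rcases h with ⟨h, -⟩ | ⟨h, -⟩
  exacts [h ▸ Sym2.mem_mk_left _ _, h ▸ Sym2.mem_mk_right _ _]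

theorem dmap_ne_fst {p : Letter r × Letter r} (hp : p.2 ≠ p.1) (a : Letter r) :
    Dmap p a ≠ p.1 := by
  unfold Dmap
  split_ifs with h
  exacts [hp, h]

theorem dmap_collapsesAtMost (p : Letter r × Letter r) : CollapsesAtMost (Dmap p) s(p.1, p.2) := by
  intro a b hab
  unfold Dmap at hab
  split_ifs at hab with ha hb hb <;> simp_all [Sym2.eq_swap]

theorem dcompN_zero (θ : ℕ → Letter r × Letter r) : DcompN r 0 θ = id := rfl

theorem dcompN_succ (θ : ℕ → Letter r × Letter r) (i : ℕ) :
    DcompN r (i + 1) θ = Dmap (θ i) ∘ DcompN r i θ := by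
  ext1 a
  simp [DcompN, List.range_succ]

theorem dcompN_succ_ne {θ : ℕ → Letter r × Letter r} {i : ℕ} (hi : (θ i).2 ≠ (θ i).1)
    (a : Letter r) : DcompN r (i + 1) θ a ≠ (θ i).1 := by
  rw [dcompN_succ]
  exact dmap_ne_fst hi _

theorem dcompN_fst_eq_snd (θ : ℕ → Letter r × Letter r) (i : ℕ) :
    DcompN r (i + 1) θ (θ 0).1 = DcompN r (i + 1) θ (θ 0).2 := by
  induction i with
  | zero => simp [dcompN_succ, dcompN_zero, Dmap]
  | succ i ih => rw [dcompN_succ, Function.comp_apply, ih, ← Function.comp_apply (f := Dmap _)]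

theorem dcompN_collapsesAtMost {n : ℕ} {θ : ℕ → Letter r × Letter r}
    (hN : ∀ i < n, Nielsen (θ i)) (hadm : ∀ i, i + 1 < n → Adm (θ i) (θ (i + 1))) :
    ∀ i < n, CollapsesAtMost (DcompN r (i + 1) θ) s((θ 0).1, (θ 0).2) := by
  intro i hi
  induction i with
  | zero => simpa [dcompN_succ, dcompN_zero] using dmap_collapsesAtMost (θ 0)
  | succ i ih =>
    rw [dcompN_succ]
    exact (dmap_collapsesAtMost _).comp (ih (by omega)) (hadm i hi).fst_mem
      (dcompN_succ_ne (hN i (by omega)).1)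

end Nielsen

theorem stmt12_general (r n : ℕ) (hn : 1 ≤ n) (θ : ℕ → Letter r × Letter r)
    (hN : ∀ i < n, Nielsen (θ i))
    (hadm : ∀ i, i + 1 < n → Adm (θ i) (θ (i + 1)))
    (hcyc : Adm (θ (n - 1)) (θ 0)) :
    (∀ k : ℕ, 1 ≤ k →
      (Finset.univ.image ((DcompN r n θ)^[k])).card = 2 * r - 1) ∧
    DcompN r n θ (θ 0).1 = DcompN r n θ (θ 0).2 := by
  obtain ⟨m, rfl⟩ := Nat.exists_eq_add_of_le' hn
  rw [Nat.add_sub_cancel] at hcyc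
  have hcol := dcompN_collapsesAtMost hN hadm m (by omega)
  have hglue := dcompN_fst_eq_snd θ m
  have hinj : Set.InjOn (DcompN r (m + 1) θ) (Set.range (DcompN r (m + 1) θ)) :=
    (hcol.injOn_ne hcyc.fst_mem).mono <| by
      rintro _ ⟨a, rfl⟩
      exact dcompN_succ_ne (hN m (by omega)).1 a
  refine ⟨fun k hk => ?_, hglue⟩
  rw [card_image_iterate_of_injOn_range hinj hk,
    hcol.card_image (hN 0 (by omega)).1.symm hglue]
  simp [mul_comm]

/-- For a cyclically admissible sequence θ₁,…,θₙ, every power of the composed derivative map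
D = Dθₙ ∘ ⋯ ∘ Dθ₁ has image of size exactly 2r − 1; moreover D identifies the pair {x₁, y₁}. -/
theorem stmt12 (r n : ℕ) (hr : 2 ≤ r) (hn : 1 ≤ n) (θ : ℕ → Letter r × Letter r)
    (hN : ∀ i < n, Nielsen (θ i))
    (hadm : ∀ i, i + 1 < n → Adm (θ i) (θ (i + 1)))
    (hcyc : Adm (θ (n - 1)) (θ 0)) :
    (∀ k : ℕ, 1 ≤ k →
      (Finset.univ.image ((DcompN r n θ)^[k])).card = 2 * r - 1) ∧
    DcompN r n θ (θ 0).1 = DcompN r n θ (θ 0).2 :=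
  stmt12_general r n hn θ hN hadm hcyc
end
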